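/- The map J: C^q_{m,p} → {increasing sequences 0 < i_1 < ⋯ < i_p of positive integers with i_p < i_1 + m + p}, defined by writing a = pl + r with 0 ≤ r < p and setting J(α^{(a)})_k = l(m+p) + α_{r+k} for 1 ≤ k ≤ p−r and J(α^{(a)})_k = (l+1)(m+p) + α_{k−p+r} for p−r < k ≤ p, is an order isomorphism onto its image and preserves rank: a(m+p) + ∑_j(α_j − j) = ∑_i(J(α^{(a)})_i − i). -/

import Mathlib

open Finset

/-- A quantum Plücker index `α^{(a)}`: a strictly increasing sequence
`α = (α_1 < ⋯ < α_p)` in `{1, …, m+p}` together with a degree `0 ≤ a ≤ q`. -/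
structure QPI (m p q : ℕ) where
  a : ℕ
  ha : a ≤ q
  α : Fin p → ℕ
  mono : StrictMono α
  lower : ∀ i, 1 ≤ α i
  upper : ∀ i, α i ≤ m + p

/-- The partial order on quantum Plücker indices: `α^{(a)} ≤ β^{(b)}` iff `a ≤ b` and
`α_i ≤ β_{b-a+i}` for `1 ≤ i ≤ p - b + a` (here `0`-indexed). -/
def qle {m p q : ℕ} (x y : QPI m p q) : Prop :=
  x.a ≤ y.a ∧ ∀ (i : Fin p) (h : (i : ℕ) + (y.a - x.a) < p),
    x.α i ≤ y.α ⟨(i : ℕ) + (y.a - x.a), h⟩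

/-- The rank `|α^{(a)}| = a(m+p) + ∑_i (α_i - i)`. -/
def qrank {m p q : ℕ} (x : QPI m p q) : ℕ :=
  x.a * (m + p) + ∑ i : Fin p, (x.α i - ((i : ℕ) + 1))

/-- `x` is covered by `y`. -/
def qcovby {m p q : ℕ} (x y : QPI m p q) : Prop :=
  qle x y ∧ x ≠ y ∧ ∀ z, qle x z → qle z y → z = x ∨ z = y

/-- The minimal element `(1, 2, …, p)^{(0)}`. -/
def qmin (m p q : ℕ) : QPI m p q where
  a := 0
  ha := Nat.zero_le q
  α := fun i => (i : ℕ) + 1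
  mono := fun _ _ h => Nat.succ_lt_succ h
  lower := fun _ => Nat.le_add_left 1 _
  upper := fun i => by show (i : ℕ) + 1 ≤ m + p; have := i.isLt; omega

/-- The embedding `J` of the poset of quantum Plücker indices into increasing
integer sequences, defined via `a = p·l + r`, `0 ≤ r < p`. -/
def Jmap {m p q : ℕ} (x : QPI m p q) : Fin p → ℕ := fun k =>
  if h : (k : ℕ) + x.a % p < p then
    (x.a / p) * (m + p) + x.α ⟨(k : ℕ) + x.a % p, h⟩
  else
    (x.a / p + 1) * (m + p) + x.α ⟨(k : ℕ) + x.a % p - p, by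
      have h1 := k.isLt
      have h2 : x.a % p < p := Nat.mod_lt _ k.pos
      omega⟩

/-!
With 1-based indices, extend `α` quasi-periodically by `E(p l + j) = l (m+p) + α_j`; then
`J(α^{(a)})` is the window `E(a+1), …, E(a+p)`.  Since `α_p ≤ m + p < α_1 + (m+p)`, `E` is strictly
increasing, which gives the shape of `J`.  As `E(n + p) = E(n) + (m+p)`, comparing two windows
componentwise amounts to `E_α(n + a) ≤ E_β(n + b)` for all `n`.  Taking `n + a ≡ 0 (mod p)` forces
`a ≤ b`, taking `n + a ≡ i` gives `α_i ≤ β_{i+b-a}`; conversely these suffice because once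
`i + b - a` wraps past `p`, `E_β` has already reached `(l+1)(m+p) + β_1 > l(m+p) + α_i`.
Sliding the window by one adds `m + p` to its sum, which gives the rank.
-/

section ShiftExtend

variable {p : ℕ} [NeZero p]

theorem Nat.exists_eq_mul_add_fin (n : ℕ) : ∃ (l : ℕ) (j : Fin p), n = p * l + j :=
  ⟨n / p, Fin.ofNat p n, by rw [Fin.val_ofNat, Nat.div_add_mod]⟩

def shiftExtend (N : ℕ) (α : Fin p → ℕ) (n : ℕ) : ℕ :=
  n / p * N + α (Fin.ofNat p n)

variable (N : ℕ) (α : Fin p → ℕ)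

theorem shiftExtend_mul_add (l : ℕ) (j : Fin p) :
    shiftExtend N α (p * l + j) = l * N + α j := by
  have hj := j.isLt
  unfold shiftExtend
  rw [Nat.mul_add_div (NeZero.pos p), Nat.div_eq_of_lt hj, add_zero]
  congr 2
  ext
  rw [Fin.val_ofNat, Nat.mul_add_mod, Nat.mod_eq_of_lt hj]

theorem shiftExtend_mul (l : ℕ) : shiftExtend N α (p * l) = l * N + α 0 := by
  simpa using shiftExtend_mul_add N α l 0

theorem shiftExtend_zero : shiftExtend N α 0 = α 0 := by
  simpa using shiftExtend_mul N α 0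

theorem shiftExtend_fin (j : Fin p) : shiftExtend N α j = α j := by
  simpa using shiftExtend_mul_add N α 0 j

theorem shiftExtend_add_mul (n l : ℕ) :
    shiftExtend N α (n + p * l) = shiftExtend N α n + l * N := by
  obtain ⟨k, j, rfl⟩ := Nat.exists_eq_mul_add_fin (p := p) n
  rw [show p * k + j + p * l = p * (k + l) + j by ring, shiftExtend_mul_add,
    shiftExtend_mul_add]
  ring

theorem shiftExtend_add_period (n : ℕ) :
    shiftExtend N α (n + p) = shiftExtend N α n + N := by
  simpa using shiftExtend_add_mul N α n 1

theorem shiftExtend_strictMono (hα : StrictMono α) (hwin : ∀ i j, α i < N + α j) :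
    StrictMono (shiftExtend N α) := by
  refine strictMono_nat_of_lt_succ fun n => ?_
  obtain ⟨l, j, rfl⟩ := Nat.exists_eq_mul_add_fin (p := p) n
  rw [shiftExtend_mul_add]
  by_cases hj : (j : ℕ) + 1 < p
  · have := hα (show j < ⟨j + 1, hj⟩ from Fin.mk_lt_mk.mpr j.val.lt_succ_self)
    rw [add_assoc, show (j : ℕ) + 1 = (⟨j + 1, hj⟩ : Fin p) from rfl, shiftExtend_mul_add]
    omega
  · have := hwin j 0
    rw [show p * l + j + 1 = p * (l + 1) by rw [mul_add]; omega, shiftExtend_mul, add_mul]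
    omega

theorem sum_range_shiftExtend_add (a : ℕ) :
    ∑ k ∈ range p, shiftExtend N α (k + a) = a * N + ∑ i, α i := by
  induction a with
  | zero =>
    simp only [add_zero, zero_mul, zero_add, ← Fin.sum_univ_eq_sum_range, shiftExtend_fin]
  | succ a ih =>
    have slide := (sum_range_succ (fun k => shiftExtend N α (k + a)) p).symm.trans
      (sum_range_succ' (fun k => shiftExtend N α (k + a)) p)
    rw [add_comm p a, shiftExtend_add_period, zero_add] at slide
    simp only [← add_assoc, add_right_comm _ 1 a, add_mul, one_mul] at slide ⊢
    omega

theorem forall_shiftExtend_add_le_iff (β : Fin p → ℕ) (a b : ℕ) :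
    (∀ k : Fin p, shiftExtend N α (k + a) ≤ shiftExtend N β (k + b)) ↔
      ∀ n, shiftExtend N α (n + a) ≤ shiftExtend N β (n + b) := by
  refine ⟨fun h n => ?_, fun h k => h k⟩
  obtain ⟨l, k, rfl⟩ := Nat.exists_eq_mul_add_fin (p := p) n
  rw [add_comm (p * l), add_right_comm, add_right_comm _ _ b, shiftExtend_add_mul,
    shiftExtend_add_mul]
  exact Nat.add_le_add_right (h k) _

variable {N α}

theorem shiftExtend_le_shiftExtend_add {β : Fin p → ℕ} (hβ : Monotone (shiftExtend N β))
    (hwin : ∀ i j, α i < N + β j) {d : ℕ}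
    (hd : ∀ (i : Fin p) (h : (i : ℕ) + d < p), α i ≤ β ⟨i + d, h⟩) (n : ℕ) :
    shiftExtend N α n ≤ shiftExtend N β (n + d) := by
  obtain ⟨l, i, rfl⟩ := Nat.exists_eq_mul_add_fin (p := p) n
  rw [shiftExtend_mul_add]
  by_cases hi : (i : ℕ) + d < p
  · rw [add_assoc, show (i : ℕ) + d = (⟨i + d, hi⟩ : Fin p) from rfl, shiftExtend_mul_add]
    exact Nat.add_le_add_left (hd i hi) _
  · calc l * N + α i ≤ (l + 1) * N + β 0 := by have := hwin i 0; rw [add_mul]; omega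
      _ = shiftExtend N β (p * (l + 1)) := (shiftExtend_mul N β _).symm
      _ ≤ shiftExtend N β (p * l + i + d) := hβ (by rw [mul_add]; omega)

theorem le_of_forall_shiftExtend_add_le {β : Fin p → ℕ} (hβ : Monotone (shiftExtend N β))
    (hwin : ∀ i j, β i < N + α j) {a b : ℕ}
    (h : ∀ n, shiftExtend N α (n + a) ≤ shiftExtend N β (n + b)) : a ≤ b := by
  by_contra! hba
  obtain ⟨c, rfl⟩ : ∃ c, a = c + 1 := ⟨a - 1, by omega⟩
  have hpc : c + 1 ≤ p * (c + 1) := Nat.le_mul_of_pos_left _ (NeZero.pos p)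
  have hlast : p - 1 < p := Nat.sub_one_lt (NeZero.ne p)
  have key := h (p * (c + 1) - (c + 1))
  rw [Nat.sub_add_cancel hpc, shiftExtend_mul, add_mul] at key
  have hβ_le := hβ (show p * (c + 1) - (c + 1) + b ≤ p * c + (⟨p - 1, hlast⟩ : Fin p) by
    rw [mul_add] at hpc ⊢; dsimp only; omega)
  rw [shiftExtend_mul_add] at hβ_le
  have := hwin ⟨p - 1, hlast⟩ 0
  omega

theorem le_shift_of_forall_shiftExtend_add_le {β : Fin p → ℕ} {a b : ℕ} (hab : a ≤ b)
    (h : ∀ n, shiftExtend N α (n + a) ≤ shiftExtend N β (n + b))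
    (i : Fin p) (hi : (i : ℕ) + (b - a) < p) : α i ≤ β ⟨i + (b - a), hi⟩ := by
  have hpa : a ≤ p * a := Nat.le_mul_of_pos_left _ (NeZero.pos p)
  have key := h (p * a - a + i)
  rw [show p * a - a + i + a = p * a + i by omega,
    show p * a - a + i + b = p * a + (⟨i + (b - a), hi⟩ : Fin p) by dsimp only; omega,
    shiftExtend_mul_add, shiftExtend_mul_add] at key
  omega

end ShiftExtend

namespace QPI

variable {m p q : ℕ}

theorem ext {x y : QPI m p q} (ha : x.a = y.a) (hα : x.α = y.α) : x = y := by
  cases x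
  cases y
  subst ha hα
  rfl

theorem α_lt_add_α (x y : QPI m p q) (i j : Fin p) : x.α i < m + p + y.α j := by
  have := x.upper i
  have := y.lower j
  omega

variable [NeZero p]

theorem strictMono_shiftExtend (x : QPI m p q) : StrictMono (shiftExtend (m + p) x.α) :=
  shiftExtend_strictMono _ _ x.mono (α_lt_add_α x x)

theorem add_one_le_α (x : QPI m p q) (i : Fin p) : (i : ℕ) + 1 ≤ x.α i := by
  have := x.strictMono_shiftExtend.add_le_nat i 0
  rw [add_zero, shiftExtend_fin, shiftExtend_zero] at this
  have := x.lower 0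
  omega

end QPI

variable {m p q : ℕ}

theorem qle_antisymm {x y : QPI m p q} (hxy : qle x y) (hyx : qle y x) : x = y := by
  have ha : x.a = y.a := le_antisymm hxy.1 hyx.1
  refine QPI.ext ha (funext fun i => le_antisymm ?_ ?_)
  · simpa [ha] using hxy.2 i (by simp [ha])
  · simpa [ha] using hyx.2 i (by simp [ha])

variable [NeZero p]

theorem Jmap_eq_shiftExtend (x : QPI m p q) (k : Fin p) :
    Jmap x k = shiftExtend (m + p) x.α (k + x.a) := by
  have hdiv := Nat.div_add_mod x.a p
  have hmod := Nat.mod_lt x.a (NeZero.pos p)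
  have hk := k.isLt
  unfold Jmap
  split_ifs with h
  · rw [show (k : ℕ) + x.a = p * (x.a / p) + (⟨k + x.a % p, h⟩ : Fin p) by dsimp only; omega,
      shiftExtend_mul_add]
  · have hlt : (k : ℕ) + x.a % p - p < p := by omega
    rw [show (k : ℕ) + x.a = p * (x.a / p + 1) + (⟨k + x.a % p - p, hlt⟩ : Fin p) by
      dsimp only; rw [mul_add]; omega, shiftExtend_mul_add]

theorem qle_iff_forall_shiftExtend_add_le (x y : QPI m p q) :
    qle x y ↔ ∀ n, shiftExtend (m + p) x.α (n + x.a) ≤ shiftExtend (m + p) y.α (n + y.a) := by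
  have hmono := y.strictMono_shiftExtend.monotone
  constructor
  · rintro ⟨hab, hcond⟩ n
    have := shiftExtend_le_shiftExtend_add hmono (QPI.α_lt_add_α x y) hcond (n + x.a)
    rwa [add_assoc, Nat.add_sub_cancel' hab] at this
  · intro h
    have hab := le_of_forall_shiftExtend_add_le hmono (QPI.α_lt_add_α y x) h
    exact ⟨hab, le_shift_of_forall_shiftExtend_add_le hab h⟩

theorem qle_iff_Jmap_le (x y : QPI m p q) : qle x y ↔ ∀ k, Jmap x k ≤ Jmap y k := by
  simp only [Jmap_eq_shiftExtend]
  rw [forall_shiftExtend_add_le_iff, qle_iff_forall_shiftExtend_add_le]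

theorem Jmap_injective : Function.Injective (Jmap (m := m) (p := p) (q := q)) := fun x y h =>
  qle_antisymm ((qle_iff_Jmap_le x y).2 fun k => (congrFun h k).le)
    ((qle_iff_Jmap_le y x).2 fun k => (congrFun h k).ge)

theorem Jmap_strictMono (x : QPI m p q) : StrictMono (Jmap x) := fun j k hjk => by
  simp only [Jmap_eq_shiftExtend]
  exact x.strictMono_shiftExtend (Nat.add_lt_add_right hjk _)

theorem add_one_le_Jmap (x : QPI m p q) (k : Fin p) : (k : ℕ) + 1 ≤ Jmap x k := by
  have := x.strictMono_shiftExtend.add_le_nat (k + x.a) 0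
  rw [add_zero, ← Jmap_eq_shiftExtend, shiftExtend_zero] at this
  have := x.lower 0
  omega

theorem Jmap_last_lt (x : QPI m p q) :
    Jmap x ⟨p - 1, Nat.sub_one_lt (NeZero.ne p)⟩ < Jmap x 0 + m + p := by
  simp only [Jmap_eq_shiftExtend, Fin.val_zero, zero_add, add_assoc]
  rw [← shiftExtend_add_period]
  exact x.strictMono_shiftExtend (by have := NeZero.pos p; omega)

theorem sum_Jmap (x : QPI m p q) : ∑ k, Jmap x k = x.a * (m + p) + ∑ i, x.α i := by
  simp only [Jmap_eq_shiftExtend]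
  rw [Fin.sum_univ_eq_sum_range (fun k => shiftExtend (m + p) x.α (k + x.a)),
    sum_range_shiftExtend_add]

theorem qrank_eq_sum_Jmap (x : QPI m p q) :
    qrank x = ∑ i : Fin p, (Jmap x i - ((i : ℕ) + 1)) := by
  have hα := Finset.sum_le_sum fun i (_ : i ∈ univ) => x.add_one_le_α i
  rw [qrank, sum_tsub_distrib _ fun i _ => x.add_one_le_α i,
    sum_tsub_distrib _ fun i _ => add_one_le_Jmap x i, sum_Jmap]
  omega

/-- The map `J` is an order isomorphism of `C^q_{m,p}` onto its image in the poset of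
increasing sequences `0 < i_1 < ⋯ < i_p` of positive integers with `i_p < i_1 + m + p`
(ordered componentwise), and it preserves rank:
`a(m+p) + ∑_j (α_j - j) = ∑_i (J(α^{(a)})_i - i)`. -/
theorem Jmap_order_iso (m p q : ℕ) (hp : 0 < p) :
    (∀ x : QPI m p q, StrictMono (Jmap x) ∧ 0 < Jmap x ⟨0, hp⟩ ∧
        Jmap x ⟨p - 1, by omega⟩ < Jmap x ⟨0, hp⟩ + m + p) ∧
    (∀ x y : QPI m p q, qle x y ↔ ∀ k, Jmap x k ≤ Jmap y k) ∧
    Function.Injective (Jmap (m := m) (p := p) (q := q)) ∧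
    (∀ x : QPI m p q, qrank x = ∑ i : Fin p, (Jmap x i - ((i : ℕ) + 1))) := by
  have : NeZero p := ⟨hp.ne'⟩
  exact ⟨fun x => ⟨Jmap_strictMono x, add_one_le_Jmap x 0, Jmap_last_lt x⟩,
    qle_iff_Jmap_le, Jmap_injective, qrank_eq_sum_Jmap⟩
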